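/- arXiv:1507.02861 — 6 statements merged into one kernel-verified Lean document; each statement's English description precedes it below -/
import Mathlib

section
/- If f is holomorphic near z₀ with |f(z)| ≤ C·|z−z₀|^m for some C > 0 and integer m ≥ 1 near z₀, and z : [t₁, t₂] → ℂ is a solution of ż = f(z) with 2^{-(n+1)} ≤ |z(t)−z₀| ≤ 2^{-n} on [t₁,t₂], |z(t₁)−z₀| = 2^{-n}, and |z(t₂)−z₀| = 2^{-(n+1)}, then t₂ − t₁ ≥ 2^{(m−1)n−1}/C; in particular t₂ − t₁ ≥ 1/(2C). -/
/-- If `f` is holomorphic near `z₀` with `|f(z)| ≤ C|z-z₀|^m` (C > 0, m ≥ 1) near `z₀`,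
and `z : [t₁,t₂] → ℂ` solves `ż = f(z)` with `2^{-(n+1)} ≤ |z(t)-z₀| ≤ 2^{-n}` on `[t₁,t₂]`,
`|z(t₁)-z₀| = 2^{-n}` and `|z(t₂)-z₀| = 2^{-(n+1)}`, then
`t₂ - t₁ ≥ 2^{(m-1)n-1}/C`, and in particular `t₂ - t₁ ≥ 1/(2C)`. -/
theorem stmt0 (f : ℂ → ℂ) (z₀ : ℂ) (C : ℝ) (hC : 0 < C) (m : ℕ) (hm : 1 ≤ m) (n : ℕ)
    (hol : ∀ w : ℂ, w ≠ z₀ → ‖w - z₀‖ ≤ (2 : ℝ) ^ (-(n : ℝ)) → AnalyticAt ℂ f w)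
    (hf : ∀ w : ℂ, w ≠ z₀ → ‖w - z₀‖ ≤ (2 : ℝ) ^ (-(n : ℝ)) → ‖f w‖ ≤ C * ‖w - z₀‖ ^ m)
    (z : ℝ → ℂ) (t₁ t₂ : ℝ) (ht : t₁ ≤ t₂)
    (hz : ∀ t ∈ Set.Icc t₁ t₂, HasDerivAt z (f (z t)) t)
    (hlow : ∀ t ∈ Set.Icc t₁ t₂, (2 : ℝ) ^ (-(n : ℝ) - 1) ≤ ‖z t - z₀‖)
    (hup : ∀ t ∈ Set.Icc t₁ t₂, ‖z t - z₀‖ ≤ (2 : ℝ) ^ (-(n : ℝ)))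
    (h1 : ‖z t₁ - z₀‖ = (2 : ℝ) ^ (-(n : ℝ)))
    (h2 : ‖z t₂ - z₀‖ = (2 : ℝ) ^ (-(n : ℝ) - 1)) :
    (2 : ℝ) ^ (((m : ℝ) - 1) * (n : ℝ) - 1) / C ≤ t₂ - t₁ ∧ 1 / (2 * C) ≤ t₂ - t₁ := by
  have h2pos : (0:ℝ) < 2 := two_pos
  set M : ℝ := C * (2 : ℝ) ^ (-((n : ℝ) * m)) with hMdef
  have key : ∀ t ∈ Set.Icc t₁ t₂, ‖f (z t)‖ ≤ M := by
    intro t htmem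
    have hne : z t ≠ z₀ := by
      intro h
      have hl := hlow t htmem
      rw [h, sub_self, norm_zero] at hl
      exact absurd hl (not_le.mpr (Real.rpow_pos_of_pos h2pos _))
    have hub := hup t htmem
    calc ‖f (z t)‖ ≤ C * ‖z t - z₀‖ ^ m := hf (z t) hne hub
      _ ≤ C * ((2:ℝ) ^ (-(n:ℝ))) ^ m := by
          gcongr
      _ = M := by
          rw [hMdef, ← Real.rpow_natCast ((2:ℝ)^(-(n:ℝ))) m,
            ← Real.rpow_mul (by norm_num : (0:ℝ) ≤ 2)]
          ring_nf
  have hderiv : ∀ t ∈ Set.Icc t₁ t₂, HasDerivWithinAt z (f (z t)) (Set.Icc t₁ t₂) t :=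
    fun t htm => (hz t htm).hasDerivWithinAt
  have mv := Convex.norm_image_sub_le_of_norm_hasDerivWithin_le hderiv key
      (convex_Icc t₁ t₂) (Set.left_mem_Icc.mpr ht) (Set.right_mem_Icc.mpr ht)
  have hdist : (2:ℝ) ^ (-(n:ℝ)-1) ≤ ‖z t₂ - z t₁‖ := by
    have hns := norm_sub_norm_le (z t₁ - z₀) (z t₂ - z₀)
    have heq : z t₁ - z₀ - (z t₂ - z₀) = -(z t₂ - z t₁) := by ring
    rw [heq, norm_neg, h1, h2] at hns
    have hsplit : (2:ℝ)^(-(n:ℝ)) - (2:ℝ)^(-(n:ℝ)-1) = (2:ℝ)^(-(n:ℝ)-1) := by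
      rw [show (-(n:ℝ)) = (-(n:ℝ)-1)+1 by ring, Real.rpow_add h2pos, Real.rpow_one]
      ring
    linarith
  have hnorm : ‖t₂ - t₁‖ = t₂ - t₁ := by
    rw [Real.norm_eq_abs, abs_of_nonneg (by linarith)]
  rw [hnorm] at mv
  have hMain : (2:ℝ)^(-(n:ℝ)-1) ≤ M * (t₂ - t₁) := le_trans hdist mv
  have hb : (0:ℝ) < (2:ℝ)^((n:ℝ)*m) := Real.rpow_pos_of_pos h2pos _
  have hmul := mul_le_mul_of_nonneg_right hMain hb.le
  have hleft : (2:ℝ)^(-(n:ℝ)-1) * (2:ℝ)^((n:ℝ)*m)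
      = (2:ℝ) ^ (((m : ℝ) - 1) * (n : ℝ) - 1) := by
    rw [← Real.rpow_add h2pos]; ring_nf
  have hright : M * (t₂ - t₁) * (2:ℝ)^((n:ℝ)*m) = C * (t₂ - t₁) := by
    rw [hMdef]
    have : (2:ℝ)^(-((n:ℝ)*m)) * (2:ℝ)^((n:ℝ)*m) = 1 := by
      rw [← Real.rpow_add h2pos]; norm_num
    calc C * (2:ℝ)^(-((n:ℝ)*m)) * (t₂ - t₁) * (2:ℝ)^((n:ℝ)*m)
        = C * (t₂ - t₁) * ((2:ℝ)^(-((n:ℝ)*m)) * (2:ℝ)^((n:ℝ)*m)) := by ring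
      _ = C * (t₂ - t₁) := by rw [this]; ring
  rw [hleft, hright] at hmul
  have first : (2 : ℝ) ^ (((m : ℝ) - 1) * (n : ℝ) - 1) / C ≤ t₂ - t₁ := by
    rw [div_le_iff₀ hC]
    linarith
  refine ⟨first, ?_⟩
  have hexp : (-1:ℝ) ≤ ((m : ℝ) - 1) * (n : ℝ) - 1 := by
    have hm' : (1:ℝ) ≤ (m:ℝ) := by exact_mod_cast hm
    have hn' : (0:ℝ) ≤ (n:ℝ) := Nat.cast_nonneg n
    nlinarith
  have h2le : (2:ℝ)^(-1:ℝ) ≤ (2 : ℝ) ^ (((m : ℝ) - 1) * (n : ℝ) - 1) :=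
    Real.rpow_le_rpow_left_iff one_lt_two |>.mpr hexp
  have : 1 / (2 * C) ≤ (2 : ℝ) ^ (((m : ℝ) - 1) * (n : ℝ) - 1) / C := by
    rw [Real.rpow_neg_one] at h2le
    rw [show 1 / (2*C) = 2⁻¹ / C by field_simp]
    gcongr
  linarith
end

section
/- Let z(t) solve ż = f(z) for a meromorphic f with maximal interval (a₀, b₀) and b₀ < ∞. If z₀ ∈ ℂ is a limit point of z(t) as t → b₀⁻ (i.e., z(sₙ) → z₀ along some sₙ → b₀⁻) and f(z₀) ≠ 0 and f is holomorphic at z₀, then a contradiction follows; equivalently, every finite limit point z₀ of z(t) as t → b₀⁻ satisfies f(z₀) = 0 or z₀ is a pole of f. -/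
/-!
Near `z₀` the field is `C¹`, so by Picard–Lindelöf every solution starting close to `z₀` exists
for a uniform time `ε`, and it cannot leave a ball on which `f` is bounded and Lipschitz before
that time. Restart the flow at a time `s k > b₀ - ε` at which `z (s k)` is close to `z₀`: the
new solution lives beyond `b₀` and, by uniqueness, agrees with `z` on `(s k, b₀)`, so gluing the
two extends `z` past `b₀`, contradicting maximality.
-/

open Set Filter Metric Topology

section Trajectory

variable {E : Type*} [NormedAddCommGroup E] [NormedSpace ℝ E] {F : E → E}

theorem mapsTo_closedBall_of_hasDerivAt {x₀ : E} {R M ρ a b : ℝ} {g : ℝ → E}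
    (hF : ∀ x ∈ closedBall x₀ R, ‖F x‖ ≤ M) (hM : 0 ≤ M)
    (hg : ∀ t ∈ Icc a b, HasDerivAt g (F (g t)) t) (hga : dist (g a) x₀ ≤ ρ)
    (hρ : ρ + M * (b - a) < R) : MapsTo g (Icc a b) (closedBall x₀ R) := by
  -- The fencing lemma needs a strict speed bound, hence a slightly steeper fence of slope `M'`.
  obtain ⟨M', hM'R, hMM'⟩ : ∃ M', ρ + M' * (b - a) < R ∧ M < M' := by
    have hcont : Tendsto (fun M' ↦ ρ + M' * (b - a)) (𝓝[>] M) (𝓝 (ρ + M * (b - a))) :=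
      ((continuous_const.add (continuous_id.mul continuous_const)).tendsto M).mono_left
        nhdsWithin_le_nhds
    exact ((hcont.eventually (gt_mem_nhds hρ)).and self_mem_nhdsWithin).exists
  have hfence : ∀ t ∈ Icc a b, ‖g t - x₀‖ ≤ ρ + M' * (t - a) := by
    refine image_norm_le_of_norm_deriv_right_lt_deriv_boundary (f' := fun t ↦ F (g t))
      (HasDerivAt.continuousOn fun t ht ↦ (hg t ht).sub_const x₀)
      (fun t ht ↦ ((hg t (Ico_subset_Icc_self ht)).sub_const x₀).hasDerivWithinAt)
      (by simpa [← dist_eq_norm] using hga)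
      (fun t ↦ ((hasDerivAt_id t).sub_const a).const_mul M' |>.const_add ρ |>.congr_deriv
        (mul_one M')) fun t ht hgt ↦ ?_
    refine (hF _ (mem_closedBall_iff_norm.2 ?_)).trans_lt hMM'
    nlinarith [ht.2]
  intro t ht
  rw [mem_closedBall, dist_eq_norm]
  nlinarith [hfence t ht, ht.2]

theorem ODE_solution_unique_of_lipschitzOnWith_closedBall {x₀ : E} {R M ρ a b : ℝ}
    {K : NNReal} {g h : ℝ → E}
    (hF : ∀ x ∈ closedBall x₀ R, ‖F x‖ ≤ M) (hM : 0 ≤ M)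
    (hK : LipschitzOnWith K F (closedBall x₀ R))
    (hg : ∀ t ∈ Icc a b, HasDerivAt g (F (g t)) t) (hh : ∀ t ∈ Icc a b, HasDerivAt h (F (h t)) t)
    (hgh : g a = h a) (hga : dist (g a) x₀ ≤ ρ) (hρ : ρ + M * (b - a) < R) :
    EqOn g h (Icc a b) :=
  ODE_solution_unique_of_mem_Icc_right (v := fun _ ↦ F) (fun _ _ ↦ hK)
    (HasDerivAt.continuousOn hg) (fun t ht ↦ (hg t (Ico_subset_Icc_self ht)).hasDerivWithinAt)
    (fun _ ht ↦ mapsTo_closedBall_of_hasDerivAt hF hM hg hga hρ (Ico_subset_Icc_self ht))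
    (HasDerivAt.continuousOn hh) (fun t ht ↦ (hh t (Ico_subset_Icc_self ht)).hasDerivWithinAt)
    (fun _ ht ↦ mapsTo_closedBall_of_hasDerivAt hF hM hh (hgh ▸ hga) hρ (Ico_subset_Icc_self ht))
    hgh

theorem hasDerivAt_piecewise_Iio_of_eqOn {z y : ℝ → E} {a b c d : ℝ}
    (hz : ∀ t ∈ Ioo a b, HasDerivAt z (F (z t)) t) (hy : ∀ t ∈ Ioo c d, HasDerivAt y (F (y t)) t)
    (hcb : c < b) (hzy : EqOn z y (Ioo c b)) :
    ∀ t ∈ Ioo a d, HasDerivAt ((Iio b).piecewise z y) (F ((Iio b).piecewise z y t)) t := by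
  intro t ht
  rcases lt_or_ge t b with htb | hbt
  · rw [piecewise_eq_of_mem (Iio b) z y htb]
    refine (hz t ⟨ht.1, htb⟩).congr_of_eventuallyEq ?_
    filter_upwards [Iio_mem_nhds htb] with u hu using piecewise_eq_of_mem (Iio b) z y hu
  · rw [piecewise_eq_of_notMem (Iio b) z y hbt.not_gt]
    refine (hy t ⟨hcb.trans_le hbt, ht.2⟩).congr_of_eventuallyEq ?_
    filter_upwards [Ioi_mem_nhds (hcb.trans_le hbt)] with u hu
    by_cases hub : u < b
    · rw [piecewise_eq_of_mem (Iio b) z y hub, hzy ⟨hu, hub⟩]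
    · exact piecewise_eq_of_notMem (Iio b) z y hub

end Trajectory

theorem exists_extension_of_tendsto_of_contDiffAt {E : Type*} [NormedAddCommGroup E]
    [NormedSpace ℝ E] [CompleteSpace E] {F : E → E} {z : ℝ → E} {a₀ b₀ : ℝ}
    (hz : ∀ t ∈ Ioo a₀ b₀, HasDerivAt z (F (z t)) t) {x₀ : E} (hF : ContDiffAt ℝ 1 F x₀)
    {s : ℕ → ℝ} (hs : ∀ k, s k ∈ Ioo a₀ b₀) (hs_lim : Tendsto s atTop (𝓝 b₀))
    (hzs : Tendsto (fun k ↦ z (s k)) atTop (𝓝 x₀)) :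
    ∃ (b₁ : ℝ) (w : ℝ → E), b₀ < b₁ ∧ (∀ t ∈ Ioo a₀ b₁, HasDerivAt w (F (w t)) t) ∧
      (∀ t ∈ Ioo a₀ b₀, w t = z t) := by
  -- Solutions starting in `closedBall x₀ r` exist for a uniform time `ε`.
  obtain ⟨ε, hε, R, r, L, K, hr, hpl⟩ := IsPicardLindelof.of_contDiffAt_one hF
  obtain ⟨k, hk_time, hk_near⟩ : ∃ k, b₀ - ε < s k ∧ dist (z (s k)) x₀ < r :=
    ((hs_lim.eventually (lt_mem_nhds (sub_lt_self b₀ hε))).and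
      (hzs.eventually (ball_mem_nhds x₀ (NNReal.coe_pos.2 hr)))).exists
  set t₁ := s k
  have ht₁ : t₁ ∈ Icc (t₁ - ε) (t₁ + ε) := ⟨by linarith, by linarith⟩
  have hbound := (hpl t₁).norm_le t₁ ht₁
  have hLip := (hpl t₁).lipschitzOnWith t₁ ht₁
  have htime := (hpl t₁).mul_max_le
  simp only [add_sub_cancel_left, sub_sub_cancel, max_self] at htime
  obtain ⟨y, hy₀, hy⟩ := (hpl t₁).exists_eq_forall_mem_Icc_hasDerivWithinAt hk_near.le
  have hy' : ∀ t ∈ Ioo t₁ (t₁ + ε), HasDerivAt y (F (y t)) t := fun t ht ↦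
    (hy t ⟨by linarith [ht.1], ht.2.le⟩).hasDerivAt (Icc_mem_nhds (by linarith [ht.1]) ht.2)
  have hzy : EqOn z y (Ioo t₁ b₀) := by
    intro c hc
    refine ODE_solution_unique_of_lipschitzOnWith_closedBall hbound L.coe_nonneg hLip
      (fun t ht ↦ hz t ⟨(hs k).1.trans_le ht.1, ht.2.trans_lt hc.2⟩)
      (fun t ht ↦ (hy t ⟨by linarith [ht.1], by linarith [ht.2, hc.2]⟩).hasDerivAt
        (Icc_mem_nhds (by linarith [ht.1]) (by linarith [ht.2, hc.2])))
      hy₀.symm le_rfl ?_ ⟨hc.1.le, le_rfl⟩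
    have := mul_le_mul_of_nonneg_left (show c - t₁ ≤ ε by linarith [hc.2]) L.coe_nonneg
    linarith
  exact ⟨t₁ + ε, (Iio b₀).piecewise z y, by linarith, hasDerivAt_piecewise_Iio_of_eqOn hz hy'
    (hs k).2 hzy, fun t ht ↦ piecewise_eq_of_mem (Iio b₀) z y ht.2⟩

theorem stmt2_general (f : ℂ → ℂ)
    (z : ℝ → ℂ) (a₀ b₀ : ℝ)
    (hz : ∀ t ∈ Set.Ioo a₀ b₀, HasDerivAt z (f (z t)) t)
    (hmax : ¬ ∃ (b₁ : ℝ) (w : ℝ → ℂ), b₀ < b₁ ∧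
      (∀ t ∈ Set.Ioo a₀ b₁, HasDerivAt w (f (w t)) t) ∧
      (∀ t ∈ Set.Ioo a₀ b₀, w t = z t))
    (z₀ : ℂ) (s : ℕ → ℝ) (hs : ∀ k, s k ∈ Set.Ioo a₀ b₀)
    (hs2 : Filter.Tendsto s Filter.atTop (nhds b₀))
    (hzs : Filter.Tendsto (fun k => z (s k)) Filter.atTop (nhds z₀))
    (hfz : AnalyticAt ℂ f z₀) : False :=
  hmax (exists_extension_of_tendsto_of_contDiffAt hz (hfz.contDiffAt.restrict_scalars ℝ) hs hs2 hzs)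

/-- Let `z(t)` solve `ż = f(z)` for `f` meromorphic on `ℂ`, on a maximal interval
`(a₀, b₀)` with `b₀ < ∞`. If `z₀ ∈ ℂ` is a limit point of `z(t)` as `t → b₀⁻`
(along some sequence `sₙ → b₀⁻`), `f` is holomorphic at `z₀` and `f z₀ ≠ 0`,
then a contradiction follows: every finite limit point is a zero or a pole of `f`. -/
theorem stmt2 (f : ℂ → ℂ) (hf : MeromorphicOn f Set.univ)
    (z : ℝ → ℂ) (a₀ b₀ : ℝ) (hab : a₀ < b₀)
    (hz : ∀ t ∈ Set.Ioo a₀ b₀, HasDerivAt z (f (z t)) t)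
    (hmax : ¬ ∃ (b₁ : ℝ) (w : ℝ → ℂ), b₀ < b₁ ∧
      (∀ t ∈ Set.Ioo a₀ b₁, HasDerivAt w (f (w t)) t) ∧
      (∀ t ∈ Set.Ioo a₀ b₀, w t = z t))
    (z₀ : ℂ) (s : ℕ → ℝ) (hs : ∀ k, s k ∈ Set.Ioo a₀ b₀)
    (hs2 : Filter.Tendsto s Filter.atTop (nhds b₀))
    (hzs : Filter.Tendsto (fun k => z (s k)) Filter.atTop (nhds z₀))
    (hfz : AnalyticAt ℂ f z₀) (hfz0 : f z₀ ≠ 0) : False :=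
  stmt2_general f z a₀ b₀ hz hmax z₀ s hs hs2 hzs hfz
end

section
/- Let f be meromorphic and non-constant on ℂ and let z(t) be a trajectory of ż = f(z) with maximal interval of definition (a₀, b₀) where b₀ < ∞. Then lim_{t→b₀⁻} z(t) exists in the Riemann sphere and is either ∞ or a pole of f. -/
open scoped OnePoint

/-!
If `z` does not tend to `∞` as `t → b₀⁻`, it has a finite cluster point `c`. Since `f` is
meromorphic, it is continuous on a punctured disc around `c`, hence bounded by some `M` on each
small closed annulus `r/2 ≤ |w - c| ≤ r`. Once `z` enters the disc of radius `r/2` at a time `t₀`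
with `M (b₀ - t₀) < r/2`, it moves too slowly to cross the annulus before `b₀`, so `z → c`.
If `f` were analytic at `c`, gluing `z` to the Picard–Lindelöf solution through `(b₀, c)` would
continue the trajectory past `b₀`; hence `c` is a pole.
-/

open Set Filter Metric Topology

section Trajectory

variable {E : Type*} [NormedAddCommGroup E] [NormedSpace ℝ E] {f : E → E} {z : ℝ → E}

theorem norm_sub_le_of_forall_norm_lt_on_annulus {c : E} {ρ r M t₀ b : ℝ} (hM : 0 ≤ M)
    (hz : ∀ t ∈ Ico t₀ b, HasDerivAt z (f (z t)) t)
    (hf : ∀ w, ρ ≤ ‖w - c‖ → ‖w - c‖ < r → ‖f w‖ < M)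
    (h₀ : ‖z t₀ - c‖ ≤ ρ) (hb : ρ + M * (b - t₀) < r) {t : ℝ} (ht : t ∈ Ico t₀ b) :
    ‖z t - c‖ ≤ ρ + M * (t - t₀) := by
  have hsub : Icc t₀ t ⊆ Ico t₀ b := Icc_subset_Ico_right ht.2
  -- `ρ + M (s - t₀)` is a barrier: wherever `‖z s - c‖` touches it, `z s` lies in the annulus.
  refine image_norm_le_of_norm_deriv_right_lt_deriv_boundary' (f := fun s => z s - c)
    (f' := fun s => f (z s)) (B := fun s => ρ + M * (s - t₀)) (B' := fun _ => M)
    (fun s hs => ((hz s (hsub hs)).continuousAt.sub continuousAt_const).continuousWithinAt)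
    (fun s hs => ((hz s (hsub (Ico_subset_Icc_self hs))).sub_const c).hasDerivWithinAt)
    (by simpa using h₀) (by fun_prop)
    (fun s _ => (((hasDerivAt_id s).sub_const t₀).const_mul M).const_add ρ |>.hasDerivWithinAt
      |>.congr_deriv (mul_one M)) (fun s hs hs' => hf _ ?_ ?_) ⟨ht.1, le_rfl⟩
  · rw [hs']; nlinarith [hs.1]
  · rw [hs']; nlinarith [hs.2, ht.2]

theorem tendsto_nhds_of_mapClusterPt_of_trajectory [ProperSpace E] {b : ℝ} {c : E}
    (hz : ∀ᶠ t in 𝓝[<] b, HasDerivAt z (f (z t)) t)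
    (hf : ∀ᶠ w in 𝓝[≠] c, ContinuousAt f w) (hc : MapClusterPt c (𝓝[<] b) z) :
    Tendsto z (𝓝[<] b) (𝓝 c) := by
  obtain ⟨a, hab, ha⟩ := mem_nhdsLT_iff_exists_Ioo_subset.1 hz
  obtain ⟨r₀, hr₀, hfr₀⟩ := Metric.eventually_nhds_iff.1 (eventually_nhdsWithin_iff.1 hf)
  rw [Metric.tendsto_nhds]
  intro ε hε
  set r := min ε r₀ / 2
  have hr : 0 < r := by positivity
  obtain ⟨C, hC⟩ := ((isCompact_closedBall c r).diff (isOpen_ball (x := c) (ε := r / 2))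
    ).exists_bound_of_continuousOn (f := f) fun w hw =>
      (hfr₀ (lt_of_le_of_lt hw.1 (by simp only [r]; linarith [min_le_right ε r₀]))
        fun h => hw.2 (by rw [h]; exact mem_ball_self (half_pos hr))).continuousWithinAt
  set M := max C 0 + 1
  have hM : 0 < M := by positivity
  have hfM : ∀ w, r / 2 ≤ ‖w - c‖ → ‖w - c‖ < r → ‖f w‖ < M := fun w h₁ h₂ =>
    (hC w ⟨by simpa [dist_eq_norm] using h₂.le, by simpa [dist_eq_norm] using h₁⟩).trans_lt
      (by simp only [M]; linarith [le_max_left C 0])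
  have htime : ∀ᶠ t in 𝓝[<] b, M * (b - t) < r / 2 :=
    (((continuous_const.mul (continuous_const.sub continuous_id)).tendsto' b 0 (by simp)).mono_left
      nhdsWithin_le_nhds).eventually_lt_const (half_pos hr)
  obtain ⟨t₀, hzt₀, ht₀, ht₀b⟩ :=
    ((hc.frequently (ball_mem_nhds c (half_pos hr))).and_eventually
      (Filter.Eventually.and (Ioo_mem_nhdsLT hab) htime)).exists
  filter_upwards [Ioo_mem_nhdsLT ht₀.2] with t ht
  have := norm_sub_le_of_forall_norm_lt_on_annulus hM.le
    (fun s hs => ha ⟨ht₀.1.trans_le hs.1, hs.2⟩) hfM (by simpa [dist_eq_norm] using hzt₀.le)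
    (by linarith) ⟨ht.1.le, ht.2⟩
  have hrε : r < ε := by simp only [r]; linarith [min_le_left ε r₀]
  rw [dist_eq_norm]
  nlinarith [mul_le_mul_of_nonneg_left (sub_le_sub_right ht.2.le t₀) hM.le]

theorem hasDerivWithinAt_Iic_of_trajectory {a b : ℝ} (hab : a < b)
    (hz : ∀ t ∈ Ioo a b, HasDerivAt z (f (z t)) t) (hzb : ContinuousWithinAt z (Iio b) b)
    (hf : ContinuousAt f (z b)) : HasDerivWithinAt z (f (z b)) (Iic b) b := by
  refine hasDerivWithinAt_Iic_of_tendsto_deriv (s := Ioo a b)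
    (fun t ht => (hz t ht).differentiableAt.differentiableWithinAt)
    (hzb.mono Ioo_subset_Iio_self) (Ioo_mem_nhdsLT hab) ?_
  refine (hf.tendsto.comp hzb).congr' ?_
  filter_upwards [Ioo_mem_nhdsLT hab] with t ht using ((hz t ht).deriv).symm

theorem exists_trajectory_extension_of_tendsto [CompleteSpace E] {a b : ℝ} {L : E} (hab : a < b)
    (hz : ∀ t ∈ Ioo a b, HasDerivAt z (f (z t)) t) (hL : Tendsto z (𝓝[<] b) (𝓝 L))
    (hf : ContDiffAt ℝ 1 f L) :
    ∃ (b₁ : ℝ) (w : ℝ → E), b < b₁ ∧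
      (∀ t ∈ Ioo a b₁, HasDerivAt w (f (w t)) t) ∧ (∀ t ∈ Ioo a b, w t = z t) := by
  obtain ⟨y, hyb, ε, hε, hy⟩ := hf.exists_forall_mem_closedBall_exists_eq_forall_mem_Ioo_hasDerivAt₀ b
  set w : ℝ → E := fun t => if t < b then z t else y t
  have hwb : w b = L := by simp [w, hyb]
  have hw_left : ∀ t ∈ Ioo a b, HasDerivAt w (f (w t)) t := fun t ht => by
    have hwz : w =ᶠ[𝓝 t] z := by
      filter_upwards [Iio_mem_nhds ht.2] with s hs using if_pos hs
    rw [hwz.eq_of_nhds]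
    exact (hz t ht).congr_of_eventuallyEq hwz
  have hw_right : ∀ t ∈ Ico b (b + ε), HasDerivWithinAt w (f (w t)) (Ici t) t := fun t ht => by
    have hwy : EqOn w y (Ici t) := fun s hs => if_neg (not_lt.2 (ht.1.trans hs))
    rw [hwy self_mem_Ici]
    exact (hy t ⟨by linarith [ht.1], ht.2⟩).hasDerivWithinAt.congr hwy (hwy self_mem_Ici)
  have hw_at_b : HasDerivAt w (f (w b)) b := by
    have hcont : ContinuousWithinAt w (Iio b) b := by
      rw [ContinuousWithinAt, hwb]
      exact hL.congr' (eventually_nhdsWithin_of_forall fun t ht => (if_pos ht).symm)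
    have := (hasDerivWithinAt_Iic_of_trajectory hab hw_left hcont
      (hwb ▸ hf.continuousAt)).union (hw_right b ⟨le_rfl, by linarith⟩)
    rwa [Iic_union_Ici, hasDerivWithinAt_univ] at this
  refine ⟨b + ε, w, by linarith, fun t ht => ?_, fun t ht => if_pos ht.2⟩
  rcases lt_trichotomy t b with htb | rfl | htb
  · exact hw_left t ⟨ht.1, htb⟩
  · exact hw_at_b
  · have hwy : w =ᶠ[𝓝 t] y := by
      filter_upwards [Ioi_mem_nhds htb] with s hs using if_neg (not_lt.2 hs.le)
    rw [hwy.eq_of_nhds]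
    exact (hy t ⟨by linarith, ht.2⟩).congr_of_eventuallyEq hwy

end Trajectory

theorem OnePoint.tendsto_infty_or_exists_mapClusterPt {X α : Type*} [TopologicalSpace X]
    {l : Filter α} (u : α → X) :
    Tendsto (fun a => (u a : OnePoint X)) l (𝓝 ∞) ∨ ∃ c : X, MapClusterPt c l u := by
  by_contra! h
  refine h.1 (tendsto_nhds_of_unique_mapClusterPt fun p hp => ?_)
  induction p using OnePoint.rec with
  | infty => rfl
  | coe c =>
    exact (h.2 c (OnePoint.isOpenEmbedding_coe.isInducing.mapClusterPt_iff.1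
      (mapClusterPt_comp.1 hp))).elim

theorem stmt3_general (f : ℂ → ℂ) (hf : MeromorphicOn f Set.univ)
    (z : ℝ → ℂ) (a₀ b₀ : ℝ) (hab : a₀ < b₀)
    (hz : ∀ t ∈ Set.Ioo a₀ b₀, HasDerivAt z (f (z t)) t)
    (hmax : ¬ ∃ (b₁ : ℝ) (w : ℝ → ℂ), b₀ < b₁ ∧
      (∀ t ∈ Set.Ioo a₀ b₁, HasDerivAt w (f (w t)) t) ∧
      (∀ t ∈ Set.Ioo a₀ b₀, w t = z t)) :
    Filter.Tendsto (fun t => ((z t : ℂ) : OnePoint ℂ)) (nhdsWithin b₀ (Set.Iio b₀))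
        (nhds (∞ : OnePoint ℂ)) ∨
      ∃ z₀ : ℂ, (¬ AnalyticAt ℂ f z₀) ∧
        Filter.Tendsto z (nhdsWithin b₀ (Set.Iio b₀)) (nhds z₀) := by
  refine (OnePoint.tendsto_infty_or_exists_mapClusterPt z).imp_right fun ⟨c, hc⟩ => ?_
  have hlim : Tendsto z (𝓝[<] b₀) (𝓝 c) :=
    tendsto_nhds_of_mapClusterPt_of_trajectory (Filter.mem_of_superset (Ioo_mem_nhdsLT hab) hz)
      ((hf c (mem_univ c)).eventually_analyticAt.mono fun _ h => h.continuousAt) hc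
  exact ⟨c, fun hA => hmax (exists_trajectory_extension_of_tendsto hab hz hlim
    (hA.contDiffAt.restrict_scalars ℝ)), hlim⟩

/-- Let `f` be meromorphic and non-constant on `ℂ` and let `z(t)` be a trajectory of
`ż = f(z)` with maximal interval of definition `(a₀, b₀)`, `b₀ < ∞`. Then
`lim_{t → b₀⁻} z(t)` exists in the Riemann sphere and is either `∞` or a pole of `f`. -/
theorem stmt3 (f : ℂ → ℂ) (hf : MeromorphicOn f Set.univ)
    (hnc : ¬ ∃ c : ℂ, ∀ w : ℂ, AnalyticAt ℂ f w → f w = c)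
    (z : ℝ → ℂ) (a₀ b₀ : ℝ) (hab : a₀ < b₀)
    (hz : ∀ t ∈ Set.Ioo a₀ b₀, HasDerivAt z (f (z t)) t)
    (hmax : ¬ ∃ (b₁ : ℝ) (w : ℝ → ℂ), b₀ < b₁ ∧
      (∀ t ∈ Set.Ioo a₀ b₁, HasDerivAt w (f (w t)) t) ∧
      (∀ t ∈ Set.Ioo a₀ b₀, w t = z t)) :
    Filter.Tendsto (fun t => ((z t : ℂ) : OnePoint ℂ)) (nhdsWithin b₀ (Set.Iio b₀))
        (nhds (∞ : OnePoint ℂ)) ∨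
      ∃ z₀ : ℂ, (¬ AnalyticAt ℂ f z₀) ∧
        Filter.Tendsto z (nhdsWithin b₀ (Set.Iio b₀)) (nhds z₀) :=
  stmt3_general f hf z a₀ b₀ hab hz hmax
end

section
/- If f is holomorphic near z₀ with f(z) ~ c(z−z₀)^{−m} as z → z₀ for some c ≠ 0 and integer m ≥ 0 (i.e., f has a pole of order m at z₀ when m ≥ 1, or f(z₀) = c ≠ 0 when m = 0), then the equation ż = f(z) has exactly m+1 trajectories tending to z₀ in increasing time, each taking finite time to reach z₀. -/
/-!
Near `z₀` the function `1 / f` extends analytically with a zero of order `m`, so it has a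
primitive `T` with a zero of order `m + 1` at `z₀`, and `d/dt T(z(t)) = 1` along every solution.
Writing `T = φ ^ (m + 1)` with `φ` a local biholomorphism, a solution reaching `z₀` at time `b`
satisfies `φ(z(t)) ^ (m + 1) = t - b`, hence `φ(z(t)) = (b - t) ^ (1 / (m + 1)) • e` for one of
the `m + 1` roots `e` of `-1`; conversely each of these branches is a solution. No solution tends
to `z₀` as `t → ∞`, since `T(z(t)) = t + C` is unbounded.
-/

open Filter Set Complex Topology
open scoped Real

noncomputable def rootOfNegOne (n j : ℕ) : ℂ := exp (π * I / n) * exp (2 * π * I / n) ^ j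

lemma exp_pi_mul_I_div_pow {n : ℕ} (hn : n ≠ 0) : exp (π * I / n) ^ n = -1 := by
  rw [← exp_nat_mul, mul_div_cancel₀ _ (Nat.cast_ne_zero.2 hn), exp_pi_mul_I]

lemma rootOfNegOne_pow {n : ℕ} (hn : n ≠ 0) (j : ℕ) : rootOfNegOne n j ^ n = -1 := by
  rw [rootOfNegOne, mul_pow, ← pow_mul, mul_comm j, pow_mul,
    (isPrimitiveRoot_exp n hn).pow_eq_one, one_pow, mul_one, exp_pi_mul_I_div_pow hn]

lemma rootOfNegOne_injOn (n : ℕ) : InjOn (rootOfNegOne n) (Iio n) := fun _ hj _ hk h =>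
  (isPrimitiveRoot_exp n (by rintro rfl; simp at hj)).pow_inj hj hk
    (mul_left_cancel₀ (exp_ne_zero _) h)

lemma exists_rootOfNegOne_eq {n : ℕ} (hn : n ≠ 0) {u : ℂ} (hu : u ^ n = -1) :
    ∃ j < n, rootOfNegOne n j = u := by
  have : NeZero n := ⟨hn⟩
  have hω : exp (π * I / n) ≠ 0 := exp_ne_zero _
  obtain ⟨j, hj, hju⟩ := (isPrimitiveRoot_exp n hn).eq_pow_of_pow_eq_one
    (ξ := u / exp (π * I / n))
    (by rw [div_pow, hu, exp_pi_mul_I_div_pow hn, div_self (by norm_num)])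
  exact ⟨j, hj, by rw [rootOfNegOne, hju, mul_div_cancel₀ _ hω]⟩

noncomputable def rootCurve (n j : ℕ) (t : ℝ) : ℂ :=
  ((-t) ^ (n : ℝ)⁻¹ : ℝ) * rootOfNegOne n j

section rootCurve

variable {n : ℕ} (j : ℕ)

lemma rootCurve_pow (hn : n ≠ 0) {t : ℝ} (ht : t ≤ 0) : rootCurve n j t ^ n = t := by
  rw [rootCurve, mul_pow, rootOfNegOne_pow hn, ← ofReal_pow,
    Real.rpow_inv_natCast_pow (neg_nonneg.2 ht) hn]
  push_cast
  ring

lemma rootCurve_zero (hn : n ≠ 0) : rootCurve n j 0 = 0 := by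
  simp [rootCurve, Real.zero_rpow (inv_ne_zero (Nat.cast_ne_zero.2 hn))]

lemma continuous_rootCurve (n : ℕ) : Continuous (rootCurve n j) := by
  unfold rootCurve
  have := Real.continuous_rpow_const (q := (n : ℝ)⁻¹) (by positivity)
  fun_prop

lemma differentiableAt_rootCurve {t : ℝ} (ht : t < 0) :
    DifferentiableAt ℝ (rootCurve n j) t := by
  unfold rootCurve
  have : DifferentiableAt ℝ (fun s : ℝ => (-s) ^ (n : ℝ)⁻¹) t :=
    differentiableAt_id.fun_neg.rpow_const (Or.inl (neg_pos.2 ht).ne')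
  exact (ofRealCLM.differentiableAt.comp t this).mul_const _

lemma eq_of_rootCurve_eq (hn : n ≠ 0) {j k : ℕ} (hj : j < n) (hk : k < n) {s t : ℝ}
    (hs : s < 0) (ht : t < 0) (h : rootCurve n j s = rootCurve n k t) : j = k := by
  have hst : s = t := by
    have := congrArg (· ^ n) h
    simp only [rootCurve_pow _ hn hs.le, rootCurve_pow _ hn ht.le] at this
    exact_mod_cast this
  subst hst
  refine rootOfNegOne_injOn n hj hk (mul_left_cancel₀ ?_ h)
  exact ofReal_ne_zero.2 (Real.rpow_pos_of_pos (neg_pos.2 hs) _).ne'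

lemma exists_eqOn_rootCurve (hn : n ≠ 0) {ζ : ℝ → ℂ} {s : Set ℝ} (hs : IsPreconnected s)
    (hneg : s ⊆ Iio 0) (hζ : ContinuousOn ζ s) (hpow : ∀ t ∈ s, ζ t ^ n = t) :
    ∃ j < n, EqOn ζ (rootCurve n j) s := by
  set r : ℝ → ℂ := fun t => ((-t) ^ (n : ℝ)⁻¹ : ℝ) with hr_def
  have hr0 : ∀ t ∈ s, r t ≠ 0 := fun t ht => ofReal_ne_zero.2
    (Real.rpow_pos_of_pos (neg_pos.2 (hneg ht)) _).ne'
  have hrpow : ∀ t ∈ s, r t ^ n = -t := fun t ht => by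
    rw [hr_def, ← ofReal_pow, Real.rpow_inv_natCast_pow (neg_nonneg.2 (hneg ht).le) hn, ofReal_neg]
  have hr : Continuous r := by
    have := Real.continuous_rpow_const (q := (n : ℝ)⁻¹) (by positivity)
    fun_prop
  have hcont : ContinuousOn (fun t => ζ t / r t) s := hζ.div hr.continuousOn hr0
  have hmaps : MapsTo (fun t => ζ t / r t) s (rootOfNegOne n '' Iio n) := fun t ht => by
    obtain ⟨j, hj, h⟩ := exists_rootOfNegOne_eq hn (u := ζ t / r t) (by
      rw [div_pow, hpow t ht, hrpow t ht, div_neg, div_self (ofReal_ne_zero.2 (hneg ht).ne)])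
    exact ⟨j, hj, h⟩
  obtain ⟨_, ⟨j, hj, rfl⟩, hconst⟩ := hs.eqOn_const_of_mapsTo ((finite_Iio n).image _).isDiscrete
    hcont hmaps ⟨_, mem_image_of_mem _ (Nat.pos_of_ne_zero hn)⟩
  refine ⟨j, hj, fun t ht => ?_⟩
  have := hconst ht
  simp only [Function.const_apply] at this
  rw [rootCurve, ← this, mul_div_cancel₀ _ (hr0 t ht)]

end rootCurve

lemma analyticAt_update_of_tendsto {E : Type*} [NormedAddCommGroup E] [NormedSpace ℂ E]
    [CompleteSpace E] {F : ℂ → E} {z₀ : ℂ} {c : E}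
    (hd : ∀ᶠ z in 𝓝[≠] z₀, DifferentiableAt ℂ F z)
    (hF : Tendsto F (𝓝[≠] z₀) (𝓝 c)) :
    AnalyticAt ℂ (Function.update F z₀ c) z₀ := by
  refine analyticAt_of_differentiable_on_punctured_nhds_of_continuousAt ?_
    (continuousAt_update_same.2 hF)
  filter_upwards [hd, self_mem_nhdsWithin] with z hz hne
  exact hz.congr_of_eventuallyEq <|
    (eventually_ne_nhds hne).mono fun w hw => Function.update_of_ne hw _ _

lemma AnalyticAt.exists_primitive {g : ℂ → ℂ} {z₀ : ℂ} {m : ℕ} (hg : AnalyticAt ℂ g z₀)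
    (hm : analyticOrderAt g z₀ = m) :
    ∃ T : ℂ → ℂ, AnalyticAt ℂ T z₀ ∧ analyticOrderAt T z₀ = ↑(m + 1) ∧
      ∀ᶠ z in 𝓝 z₀, HasDerivAt T (g z) z := by
  obtain ⟨r, hr, hgr⟩ := Metric.eventually_nhds_iff_ball.1 hg.eventually_analyticAt
  obtain ⟨T, hT0, hT⟩ := (DifferentiableOn.isExactOn_ball
    fun z hz => (hgr z hz).differentiableAt.differentiableWithinAt).with_val_at z₀ 0
  have hTev : ∀ᶠ z in 𝓝 z₀, HasDerivAt T (g z) z :=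
    eventually_of_mem (Metric.ball_mem_nhds z₀ hr) hT
  have hTa : AnalyticAt ℂ T z₀ :=
    DifferentiableOn.analyticAt (fun z hz => (hT z hz).differentiableAt.differentiableWithinAt)
      (Metric.ball_mem_nhds z₀ hr)
  refine ⟨T, hTa, ?_, hTev⟩
  rw [Nat.cast_succ, analyticOrderAt_deriv_eq_iff hTa hT0, ← hm]
  exact analyticOrderAt_congr (hTev.mono fun z hz => hz.deriv)

lemma AnalyticAt.exists_pow_eq {Ψ : ℂ → ℂ} {z₀ : ℂ} (hΨ : AnalyticAt ℂ Ψ z₀)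
    (h0 : Ψ z₀ ≠ 0) {n : ℕ} (hn : n ≠ 0) :
    ∃ ρ : ℂ → ℂ, AnalyticAt ℂ ρ z₀ ∧ ∀ z, ρ z ^ n = Ψ z := by
  obtain ⟨d, hd⟩ := IsAlgClosed.exists_pow_nat_eq (Ψ z₀) (Nat.pos_of_ne_zero hn)
  refine ⟨fun z => d * (Ψ z / Ψ z₀) ^ (n⁻¹ : ℂ), ?_, fun z => ?_⟩
  · refine analyticAt_const.mul ((hΨ.div analyticAt_const h0).cpow analyticAt_const ?_)
    simp [div_self h0]
  · rw [mul_pow, cpow_nat_inv_pow _ hn, hd, mul_div_cancel₀ _ h0]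

lemma AnalyticAt.exists_pow_eq_of_analyticOrderAt_eq {T : ℂ → ℂ} {z₀ : ℂ} {n : ℕ}
    (hT : AnalyticAt ℂ T z₀) (hn : n ≠ 0) (hord : analyticOrderAt T z₀ = n) :
    ∃ φ : ℂ → ℂ, AnalyticAt ℂ φ z₀ ∧ φ z₀ = 0 ∧ deriv φ z₀ ≠ 0 ∧
      ∀ᶠ z in 𝓝 z₀, φ z ^ n = T z := by
  obtain ⟨Ψ, hΨ, hΨ0, hTΨ⟩ := hT.analyticOrderAt_eq_natCast.1 hord
  obtain ⟨ρ, hρ, hρΨ⟩ := hΨ.exists_pow_eq hΨ0 hn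
  have hφ : HasDerivAt (fun z => (z - z₀) * ρ z) (ρ z₀) z₀ := by
    simpa using ((hasDerivAt_id z₀).sub_const z₀).fun_mul hρ.differentiableAt.hasDerivAt
  refine ⟨fun z => (z - z₀) * ρ z, (analyticAt_id.sub analyticAt_const).mul hρ, by simp,
    ?_, ?_⟩
  · rw [hφ.deriv]
    intro h
    exact hΨ0 (by rw [← hρΨ, h, zero_pow hn])
  · filter_upwards [hTΨ] with z hz
    rw [hz, mul_pow, hρΨ, smul_eq_mul]

lemma HasStrictDerivAt.exists_openPartialHomeomorph {𝕜 : Type*} [NontriviallyNormedField 𝕜]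
    [CompleteSpace 𝕜] {φ : 𝕜 → 𝕜} {d x : 𝕜} (hφ : HasStrictDerivAt φ d x) (hd : d ≠ 0)
    {s : Set 𝕜} (hs : s ∈ 𝓝 x) :
    ∃ Φ : OpenPartialHomeomorph 𝕜 𝕜, ⇑Φ = φ ∧ x ∈ Φ.source ∧ Φ.source ⊆ s := by
  let i : 𝕜 ≃L[𝕜] 𝕜 := .unitsEquivAut 𝕜 (.mk0 d hd)
  have hφ' : HasStrictFDerivAt φ (i : 𝕜 →L[𝕜] 𝕜) x := hφ
  obtain ⟨t, hts, ht, hxt⟩ := mem_nhds_iff.1 hs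
  exact ⟨(hφ'.toOpenPartialHomeomorph φ).restrOpen t ht, rfl,
    ⟨hφ'.mem_toOpenPartialHomeomorph_source, hxt⟩, fun z hz => hts hz.2⟩

/-- In the chart `Φ` the equation `ż = f z` becomes `d/dt (Φ z)^n = 1`: `Φ ^ n` is a time
function for the flow near `z₀`. -/
structure IsRootTimeChart (f : ℂ → ℂ) (z₀ : ℂ) (n : ℕ)
    (Φ : OpenPartialHomeomorph ℂ ℂ) : Prop where
  mem_source : z₀ ∈ Φ.source
  map_center : Φ z₀ = 0
  differentiableOn : DifferentiableOn ℂ Φ Φ.source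
  ne_zero : ∀ z ∈ Φ.source, z ≠ z₀ → f z ≠ 0
  hasDerivAt_pow : ∀ z ∈ Φ.source, z ≠ z₀ → HasDerivAt (fun w => Φ w ^ n) (f z)⁻¹ z

namespace IsRootTimeChart

variable {f : ℂ → ℂ} {z₀ : ℂ} {n : ℕ} {Φ : OpenPartialHomeomorph ℂ ℂ}
  (hΦ : IsRootTimeChart f z₀ n Φ)
include hΦ

lemma hasDerivAt_of_mem_source {z : ℂ} (hz : z ∈ Φ.source) (hz₀ : z ≠ z₀) :
    HasDerivAt Φ (deriv Φ z) z ∧ deriv Φ z ≠ 0 := by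
  have hd := (hΦ.differentiableOn z hz).differentiableAt (Φ.open_source.mem_nhds hz)
  refine ⟨hd.hasDerivAt, fun h0 => inv_ne_zero (hΦ.ne_zero z hz hz₀) ?_⟩
  refine (hΦ.hasDerivAt_pow z hz hz₀).unique ?_
  simpa [h0] using hd.hasDerivAt.fun_pow n

lemma hasDerivAt_pow_comp {w : ℝ → ℂ} {t : ℝ} (hmem : w t ∈ Φ.source) (hz₀ : w t ≠ z₀)
    (hw : HasDerivAt w (f (w t)) t) : HasDerivAt (fun s => Φ (w s) ^ n) 1 t := by
  have := (hΦ.hasDerivAt_pow _ hmem hz₀).comp t hw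
  rwa [inv_mul_cancel₀ (hΦ.ne_zero _ hmem hz₀)] at this

lemma exists_pow_eq_add_const {w : ℝ → ℂ} {s : Set ℝ} (hs : IsOpen s)
    (hs' : IsPreconnected s)
    (hw : ∀ t ∈ s, w t ∈ Φ.source ∧ w t ≠ z₀ ∧ HasDerivAt w (f (w t)) t) :
    ∃ C, ∀ t ∈ s, Φ (w t) ^ n = t + C := by
  have hderiv : ∀ t ∈ s, HasDerivAt (fun s => Φ (w s) ^ n) 1 t := fun t ht =>
    hΦ.hasDerivAt_pow_comp (hw t ht).1 (hw t ht).2.1 (hw t ht).2.2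
  have hid : ∀ t : ℝ, HasDerivAt (fun s : ℝ => (s : ℂ)) 1 t :=
    fun t => (hasDerivAt_id t).ofReal_comp
  exact hs.exists_eq_add_of_deriv_eq hs'
    (fun t ht => (hderiv t ht).differentiableAt.differentiableWithinAt)
    (fun t _ => (hid t).differentiableAt.differentiableWithinAt)
    (fun t ht => (hderiv t ht).deriv.trans (hid t).deriv.symm)

lemma tendsto_pow_comp (hn : n ≠ 0) {α : Type*} {l : Filter α} {w : α → ℂ}
    (hw : Tendsto w l (𝓝 z₀)) : Tendsto (fun t => Φ (w t) ^ n) l (𝓝 0) := by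
  have := ((Φ.continuousAt hΦ.mem_source).pow n).tendsto.comp hw
  rwa [Pi.pow_apply, hΦ.map_center, zero_pow hn] at this

lemma not_tendsto_atTop (hn : n ≠ 0) {w : ℝ → ℂ} {a : ℝ}
    (hw : ∀ t ∈ Ioi a, w t ≠ z₀ ∧ HasDerivAt w (f (w t)) t) :
    ¬ Tendsto w atTop (𝓝 z₀) := by
  intro hlim
  obtain ⟨t₀, ht₀⟩ :=
    eventually_atTop.1 (hlim.eventually (Φ.open_source.mem_nhds hΦ.mem_source))
  obtain ⟨C, hC⟩ := hΦ.exists_pow_eq_add_const (s := Ioi (max a t₀)) isOpen_Ioi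
    isPreconnected_Ioi fun t ht =>
      ⟨ht₀ t (le_of_max_le_right ht.le), hw t (lt_of_le_of_lt (le_max_left a t₀) ht)⟩
  have hzero : Tendsto (fun t => (Φ (w t) ^ n).re) atTop (𝓝 0) :=
    (continuous_re.tendsto 0).comp (hΦ.tendsto_pow_comp hn hlim)
  have hinfty : Tendsto (fun t => (Φ (w t) ^ n).re) atTop atTop := by
    refine (tendsto_atTop_add_const_right _ C.re tendsto_id).congr' ?_
    filter_upwards [eventually_gt_atTop (max a t₀)] with t ht
    simp [hC t ht]
  exact not_tendsto_nhds_of_tendsto_atTop hinfty 0 hzero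

lemma exists_eventuallyEq_symm_rootCurve (hn : n ≠ 0) {w : ℝ → ℂ} {a b : ℝ} (hab : a < b)
    (hw : ∀ t ∈ Ioo a b, w t ≠ z₀ ∧ HasDerivAt w (f (w t)) t)
    (hlim : Tendsto w (𝓝[<] b) (𝓝 z₀)) :
    ∃ j < n, ∀ᶠ t in 𝓝[<] b, w t = Φ.symm (rootCurve n j (t - b)) := by
  obtain ⟨a', ha'b, hsrc⟩ := mem_nhdsLT_iff_exists_Ioo_subset.1
    (hlim (Φ.open_source.mem_nhds hΦ.mem_source))
  set t₀ := max a a'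
  have hsol : ∀ t ∈ Ioo t₀ b, w t ∈ Φ.source ∧ w t ≠ z₀ ∧ HasDerivAt w (f (w t)) t :=
    fun t ht => ⟨hsrc ⟨lt_of_le_of_lt (le_max_right _ _) ht.1, ht.2⟩,
      hw t ⟨lt_of_le_of_lt (le_max_left _ _) ht.1, ht.2⟩⟩
  obtain ⟨C, hC⟩ := hΦ.exists_pow_eq_add_const isOpen_Ioo isPreconnected_Ioo hsol
  have hnear : Ioo t₀ b ∈ 𝓝[<] b := Ioo_mem_nhdsLT (max_lt hab ha'b)
  -- the time function tends to `Φ z₀ ^ n = 0`, which pins the constant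
  have hC_eq : C = -b := by
    have hlin : Tendsto (fun t : ℝ => (t : ℂ) + C) (𝓝[<] b) (𝓝 (b + C)) :=
      ((continuous_ofReal.tendsto b).mono_left nhdsWithin_le_nhds).add_const C
    have := tendsto_nhds_unique
      (hlin.congr' (eventuallyEq_of_mem hnear fun t ht => (hC t ht).symm))
      (hΦ.tendsto_pow_comp hn hlim)
    linear_combination this
  have hshift : MapsTo (· + b) (Ioo (t₀ - b) 0) (Ioo t₀ b) := fun t ht =>
    ⟨by linarith [ht.1], by linarith [ht.2]⟩
  have hcont : ContinuousOn (fun t => Φ (w t)) (Ioo t₀ b) := fun t ht =>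
    ((Φ.continuousAt (hsol t ht).1).comp (hsol t ht).2.2.continuousAt).continuousWithinAt
  obtain ⟨j, hj, hroot⟩ := exists_eqOn_rootCurve hn (ζ := fun t => Φ (w (t + b)))
    isPreconnected_Ioo (fun t ht => ht.2)
    (hcont.comp (continuous_add_const b).continuousOn hshift)
    (fun t ht => by rw [hC _ (hshift ht), hC_eq]; push_cast; ring)
  refine ⟨j, hj, eventually_of_mem hnear fun t ht => ?_⟩
  have := hroot (x := t - b) ⟨by linarith [ht.1], by linarith [ht.2]⟩
  simp only [sub_add_cancel] at this
  rw [← this, Φ.left_inv (hsol t ht).1]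

lemma exists_Ioo_rootCurve_mem_target (hn : n ≠ 0) (j : ℕ) :
    ∃ α < 0, ∀ t ∈ Ioo α 0, rootCurve n j t ∈ Φ.target := by
  have h0 : rootCurve n j 0 ∈ Φ.target := by
    rw [rootCurve_zero j hn, ← hΦ.map_center]
    exact Φ.map_source hΦ.mem_source
  exact mem_nhdsLT_iff_exists_Ioo_subset.1 <| nhdsWithin_le_nhds <|
    (continuous_rootCurve j n).continuousAt.preimage_mem_nhds (Φ.open_target.mem_nhds h0)

lemma tendsto_symm_rootCurve (hn : n ≠ 0) (j : ℕ) :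
    Tendsto (fun t => Φ.symm (rootCurve n j t)) (𝓝[<] 0) (𝓝 z₀) := by
  have hcont : ContinuousAt (fun t => Φ.symm (rootCurve n j t)) 0 := by
    refine ContinuousAt.comp ?_ (continuous_rootCurve j n).continuousAt
    rw [rootCurve_zero j hn, ← hΦ.map_center]
    exact Φ.symm.continuousAt (Φ.map_source hΦ.mem_source)
  have := hcont.tendsto.mono_left (nhdsWithin_le_nhds (s := Iio 0))
  rwa [rootCurve_zero j hn, ← hΦ.map_center, Φ.left_inv hΦ.mem_source] at this

lemma hasDerivAt_symm_rootCurve (hn : n ≠ 0) (j : ℕ) {t : ℝ} (ht : t < 0)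
    (htgt : rootCurve n j t ∈ Φ.target) :
    Φ.symm (rootCurve n j t) ∈ Φ.source ∧ Φ.symm (rootCurve n j t) ≠ z₀ ∧
      HasDerivAt (fun s => Φ.symm (rootCurve n j s)) (f (Φ.symm (rootCurve n j t))) t := by
  set γ : ℝ → ℂ := fun s => Φ.symm (rootCurve n j s)
  have hsrc : γ t ∈ Φ.source := Φ.map_target htgt
  have hne : γ t ≠ z₀ := by
    intro h
    have := rootCurve_pow j hn ht.le
    rw [← Φ.right_inv htgt, show Φ.symm (rootCurve n j t) = z₀ from h, hΦ.map_center,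
      zero_pow hn] at this
    exact ht.ne (by exact_mod_cast this.symm)
  obtain ⟨hΦd, hΦd0⟩ := hΦ.hasDerivAt_of_mem_source hsrc hne
  have hγ : HasDerivAt γ ((deriv Φ (γ t))⁻¹ * deriv (rootCurve n j) t) t :=
    (Φ.hasDerivAt_symm htgt hΦd0 hΦd).comp t (differentiableAt_rootCurve j ht).hasDerivAt
  have htime : HasDerivAt (fun s => Φ (γ s) ^ n) 1 t := by
    refine (hasDerivAt_id t).ofReal_comp.congr_of_eventuallyEq ?_
    filter_upwards [(continuous_rootCurve j n).continuousAt.preimage_mem_nhds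
      (Φ.open_target.mem_nhds htgt), Iio_mem_nhds ht] with s hs hs0
    simp only [γ, Φ.right_inv hs, rootCurve_pow j hn (le_of_lt hs0), id]
  have hchain := (hΦ.hasDerivAt_pow _ hsrc hne).comp t hγ
  exact ⟨hsrc, hne, hγ.congr_deriv
    ((inv_mul_eq_one₀ (hΦ.ne_zero _ hsrc hne)).1 (hchain.unique htime)).symm⟩

end IsRootTimeChart

lemma exists_isRootTimeChart {f : ℂ → ℂ} {z₀ c : ℂ} (hc : c ≠ 0) {m : ℕ} {U : Set ℂ}
    (hU : U ∈ 𝓝 z₀) (hf : ∀ᶠ z in 𝓝[≠] z₀, DifferentiableAt ℂ f z)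
    (hasym : Tendsto (fun z => f z * (z - z₀) ^ m) (𝓝[≠] z₀) (𝓝 c)) :
    ∃ Φ, IsRootTimeChart f z₀ (m + 1) Φ ∧ Φ.source ⊆ U := by
  set F := Function.update (fun z => f z * (z - z₀) ^ m) z₀ c
  have hF : AnalyticAt ℂ F z₀ :=
    analyticAt_update_of_tendsto (hf.mono fun z hz => hz.mul (by fun_prop)) hasym
  have hFz₀ : F z₀ ≠ 0 := by simpa [F] using hc
  -- `g = 1 / f` off `z₀`
  set g := fun z => (z - z₀) ^ m * (F z)⁻¹
  have hg : AnalyticAt ℂ g z₀ :=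
    ((analyticAt_id.sub analyticAt_const).pow m).mul (hF.inv hFz₀)
  have hgord : analyticOrderAt g z₀ = m :=
    hg.analyticOrderAt_eq_natCast.2 ⟨_, hF.inv hFz₀, inv_ne_zero hFz₀, .of_forall fun _ => rfl⟩
  obtain ⟨T, hTa, hTord, hT⟩ := hg.exists_primitive hgord
  obtain ⟨φ, hφa, hφ0, hφd, hφT⟩ :=
    hTa.exists_pow_eq_of_analyticOrderAt_eq m.succ_ne_zero hTord
  have hgood : ∀ᶠ z in 𝓝 z₀, z ∈ U ∧ F z ≠ 0 ∧ HasDerivAt T (g z) z ∧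
      (∀ᶠ w in 𝓝 z, φ w ^ (m + 1) = T w) ∧ DifferentiableAt ℂ φ z :=
    Filter.Eventually.and hU <| (hF.continuousAt.eventually_ne hFz₀).and <| hT.and <|
      hφT.eventually_nhds.and <| hφa.eventually_analyticAt.mono fun _ hz => hz.differentiableAt
  obtain ⟨Φ, rfl, hz₀, hsrc⟩ := hφa.hasStrictDerivAt.exists_openPartialHomeomorph hφd hgood
  have hFz : ∀ z, z ≠ z₀ → F z = f z * (z - z₀) ^ m :=
    fun z hz => Function.update_of_ne hz _ _
  have hf0 : ∀ z ∈ Φ.source, z ≠ z₀ → f z ≠ 0 := fun z hz hne =>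
    left_ne_zero_of_mul (hFz z hne ▸ (hsrc hz).2.1)
  refine ⟨Φ, ⟨hz₀, hφ0, fun z hz => (hsrc hz).2.2.2.2.differentiableWithinAt, hf0,
    fun z hz hne => ?_⟩, fun z hz => (hsrc hz).1⟩
  refine ((hsrc hz).2.2.1.congr_of_eventuallyEq (hsrc hz).2.2.2.1).congr_deriv ?_
  have : (z - z₀) ^ m ≠ 0 := pow_ne_zero _ (sub_ne_zero.2 hne)
  simp only [g, hFz z hne]
  field_simp [hf0 z hz hne]

/-- If `f` is holomorphic on a punctured neighbourhood of `z₀` with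
`f(z) ~ c (z - z₀)^{-m}` as `z → z₀` (`c ≠ 0`, `m ≥ 0`), then `ż = f(z)` has exactly
`m + 1` trajectories tending to `z₀` in increasing time, each taking finite time:
there are `m + 1` pairwise disjoint such trajectories, no trajectory tends to `z₀`
in infinite time, and every trajectory tending to `z₀` in increasing time eventually
coincides (up to time translation) with one of them. -/
theorem stmt4 (f : ℂ → ℂ) (z₀ : ℂ) (c : ℂ) (hc : c ≠ 0) (m : ℕ)
    (U : Set ℂ) (hU : U ∈ nhds z₀)
    (hol : ∀ w ∈ U \ {z₀}, AnalyticAt ℂ f w)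
    (hasym : Filter.Tendsto (fun w => f w * (w - z₀) ^ m) (nhdsWithin z₀ {z₀}ᶜ) (nhds c)) :
    ∃ (γ : Fin (m + 1) → ℝ → ℂ) (α β : Fin (m + 1) → ℝ),
      (∀ j, α j < β j ∧
        (∀ t ∈ Set.Ioo (α j) (β j), γ j t ∈ U \ {z₀} ∧ HasDerivAt (γ j) (f (γ j t)) t) ∧
        Filter.Tendsto (γ j) (nhdsWithin (β j) (Set.Iio (β j))) (nhds z₀)) ∧
      (∀ j k, j ≠ k → ∀ s ∈ Set.Ioo (α j) (β j), ∀ t ∈ Set.Ioo (α k) (β k),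
        γ j s ≠ γ k t) ∧
      (∀ (w : ℝ → ℂ) (a : ℝ),
        (∀ t ∈ Set.Ioi a, w t ∈ U \ {z₀} ∧ HasDerivAt w (f (w t)) t) →
        ¬ Filter.Tendsto w Filter.atTop (nhds z₀)) ∧
      (∀ (w : ℝ → ℂ) (a b : ℝ), a < b →
        (∀ t ∈ Set.Ioo a b, w t ∈ U \ {z₀} ∧ HasDerivAt w (f (w t)) t) →
        Filter.Tendsto w (nhdsWithin b (Set.Iio b)) (nhds z₀) →
        ∃ (j : Fin (m + 1)) (τ : ℝ),
          ∀ᶠ t in nhdsWithin b (Set.Iio b), w t = γ j (t + τ)) := by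
  have hf : ∀ᶠ z in 𝓝[≠] z₀, DifferentiableAt ℂ f z := by
    filter_upwards [nhdsWithin_le_nhds hU, self_mem_nhdsWithin] with z hzU hz
    exact (hol z ⟨hzU, hz⟩).differentiableAt
  obtain ⟨Φ, hΦ, hΦU⟩ := exists_isRootTimeChart hc hU hf hasym
  have hn : m + 1 ≠ 0 := m.succ_ne_zero
  choose α hα0 hαtgt using fun j : Fin (m + 1) => hΦ.exists_Ioo_rootCurve_mem_target hn j
  refine ⟨fun j t => Φ.symm (rootCurve (m + 1) j t), α, 0,
    fun j => ⟨hα0 j, fun t ht => ?_, hΦ.tendsto_symm_rootCurve hn j⟩, ?_, ?_, ?_⟩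
  · obtain ⟨hsrc, hne, hderiv⟩ := hΦ.hasDerivAt_symm_rootCurve hn j ht.2 (hαtgt j t ht)
    exact ⟨⟨hΦU hsrc, hne⟩, hderiv⟩
  · intro j k hjk s hs t ht heq
    exact hjk <| Fin.ext <| eq_of_rootCurve_eq hn j.isLt k.isLt hs.2 ht.2 <|
      Φ.symm.injOn (hαtgt j s hs) (hαtgt k t ht) heq
  · intro w a hw
    exact hΦ.not_tendsto_atTop hn fun t ht => ⟨(hw t ht).1.2, (hw t ht).2⟩
  · intro w a b hab hw hlim
    obtain ⟨j, hj, hev⟩ := hΦ.exists_eventuallyEq_symm_rootCurve hn hab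
      (fun t ht => ⟨(hw t ht).1.2, (hw t ht).2⟩) hlim
    exact ⟨⟨j, hj⟩, -b, hev.mono fun t ht => by rwa [← sub_eq_add_neg]⟩
end

section
/- If f is holomorphic on an annulus R < |z| < ∞ and has, at infinity, a pole of order n ≥ 2 (i.e., f(z) ~ c z^n as z → ∞ with c ≠ 0), then the equation ż = f(z) has at least n−1 trajectories z(t) with z(t) → ∞ in finite increasing time. -/
/-!
With `u = 1/z` the equation `ż = f(z)` becomes `u̇ = -1/g(u)`, where `g(u) = 1/(u² f(1/u))` is
holomorphic at `0` with a zero of order `n - 2`. A primitive `ψ` of `g` vanishing at `0` has a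
zero of order `m = n - 1`, so after a holomorphic change of variable `σ` it is `w ↦ wᵐ`. Along
`u_j(t) = σ(ζʲ (-t)^{1/m})`, with `ζ` a primitive `m`-th root of unity, we have `ψ(u_j(t)) = -t`,
so `ψ'(u_j) u̇_j = -1` and `u_j` solves the equation. These `m` curves are pairwise disjoint and
tend to `0` as `t → 0⁻`, hence `z_j = 1/u_j` escape to infinity at time `0`.
-/

open Filter Set Topology

theorem exists_curves_pow_eq_neg {m : ℕ} (hm : m ≠ 0) :
    ∃ w : Fin m → ℝ → ℂ,
      (∀ j, ∀ t < 0, DifferentiableAt ℝ (w j) t ∧ w j t ^ m = -t) ∧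
      (∀ j, Tendsto (w j) (𝓝[<] 0) (𝓝 0)) ∧
      ∀ j k, ∀ t < 0, w j t = w k t → j = k := by
  have hζ := Complex.isPrimitiveRoot_exp m hm
  set ζ := Complex.exp (2 * Real.pi * Complex.I / m)
  set r : ℝ → ℝ := fun t => (-t) ^ (m⁻¹ : ℝ)
  refine ⟨fun j t => ζ ^ (j : ℕ) * r t, fun j t ht => ⟨?_, ?_⟩, fun j => ?_, ?_⟩
  · have hr : DifferentiableAt ℝ r t :=
      differentiableAt_id.neg.rpow_const (Or.inl (neg_ne_zero.mpr ht.ne))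
    exact (hr.hasDerivAt.ofReal_comp.const_mul _).differentiableAt
  · rw [mul_pow, ← pow_mul, pow_mul', hζ.pow_eq_one, one_pow, one_mul, ← Complex.ofReal_pow,
      Real.rpow_inv_natCast_pow (neg_nonneg.mpr ht.le) hm, Complex.ofReal_neg]
  · have hr : ContinuousAt r 0 :=
      continuous_neg.continuousAt.rpow_const (Or.inr (by positivity))
    have := ((Complex.continuous_ofReal.tendsto _).comp hr.tendsto).const_mul (ζ ^ (j : ℕ))
    simpa [r, Real.zero_rpow (inv_ne_zero (Nat.cast_ne_zero.mpr hm))] using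
      this.mono_left nhdsWithin_le_nhds
  · intro j k t ht hjk
    have hr : ((r t : ℝ) : ℂ) ≠ 0 :=
      Complex.ofReal_ne_zero.mpr (Real.rpow_pos_of_pos (neg_pos.mpr ht) _).ne'
    exact Fin.ext (hζ.pow_inj j.2 k.2 (mul_right_cancel₀ hr hjk))

namespace AnalyticAt

variable {φ ψ g : ℂ → ℂ} {z₀ : ℂ} {m : ℕ}

theorem exists_analyticAt_pow_eq (hφ : AnalyticAt ℂ φ z₀) (hφ₀ : φ z₀ ≠ 0) (hm : m ≠ 0) :
    ∃ θ : ℂ → ℂ, AnalyticAt ℂ θ z₀ ∧ ∀ z, θ z ^ m = φ z := by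
  obtain ⟨r, hr⟩ := IsAlgClosed.exists_pow_nat_eq (φ z₀) (Nat.pos_of_ne_zero hm)
  have hquot : AnalyticAt ℂ (fun z => φ z / φ z₀) z₀ := hφ.div analyticAt_const hφ₀
  refine ⟨fun z => r * (φ z / φ z₀) ^ (m⁻¹ : ℂ), analyticAt_const.mul ?_, fun z => ?_⟩
  · exact hquot.cpow analyticAt_const (by simp [div_self hφ₀])
  · rw [mul_pow, Complex.cpow_nat_inv_pow _ hm, hr, mul_div_cancel₀ _ hφ₀]

theorem exists_injOn_comp_eq_pow (hψ : AnalyticAt ℂ ψ z₀) (hm : m ≠ 0)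
    (hord : analyticOrderAt ψ z₀ = m) :
    ∃ σ : ℂ → ℂ, AnalyticAt ℂ σ 0 ∧ σ 0 = z₀ ∧
      ∃ V ∈ 𝓝 (0 : ℂ), InjOn σ V ∧ ∀ w ∈ V, ψ (σ w) = w ^ m := by
  obtain ⟨φ, hφ, hφ₀, hψφ⟩ := hψ.analyticOrderAt_eq_natCast.mp hord
  obtain ⟨θ, hθ, hθφ⟩ := hφ.exists_analyticAt_pow_eq hφ₀ hm
  set ρ : ℂ → ℂ := fun z => (z - z₀) * θ z
  have hρ : AnalyticAt ℂ ρ z₀ := (analyticAt_id.sub analyticAt_const).mul hθ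
  have hρ₀ : ρ z₀ = 0 := by simp [ρ]
  have hρ' : deriv ρ z₀ ≠ 0 := by
    have : HasDerivAt ρ (θ z₀) z₀ := by
      simpa using ((hasDerivAt_id' z₀).sub_const z₀).fun_mul hθ.differentiableAt.hasDerivAt
    rw [this.deriv]
    exact fun h => hφ₀ (by rw [← hθφ, h, zero_pow hm])
  have hψρ : ∀ᶠ z in 𝓝 z₀, ψ z = ρ z ^ m := by
    filter_upwards [hψφ] with z hz
    rw [hz, smul_eq_mul, ← hθφ, mul_pow]
  set σ := hρ.hasStrictDerivAt.localInverse ρ _ _ hρ'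
  have hσ : AnalyticAt ℂ σ 0 := hρ₀ ▸ hρ.analyticAt_localInverse hρ'
  have hσ₀ : σ 0 = z₀ := hρ₀ ▸ HasStrictFDerivAt.localInverse_apply_image _
  have hσψ : ∀ᶠ w in 𝓝 0, ψ (σ w) = ρ (σ w) ^ m :=
    hσ.continuousAt.tendsto.eventually (hσ₀ ▸ hψρ)
  have hρσ : ∀ᶠ w in 𝓝 0, ρ (σ w) = w := hρ₀ ▸ HasStrictDerivAt.eventually_right_inverse _ _
  refine ⟨σ, hσ, hσ₀, _, hρσ.and hσψ, ?_, fun w hw => by rw [hw.2, hw.1]⟩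
  exact LeftInvOn.injOn (f₁' := ρ) fun w hw => hw.1

theorem exists_curves_comp_eq_neg (hψ : AnalyticAt ℂ ψ z₀) (hm : m ≠ 0)
    (hord : analyticOrderAt ψ z₀ = m) {U : Set ℂ} (hU : U ∈ 𝓝 z₀) :
    ∃ (u : Fin m → ℝ → ℂ) (α : ℝ), α < 0 ∧
      (∀ j, ∀ t ∈ Ioo α 0, u j t ∈ U ∧ DifferentiableAt ℝ (u j) t ∧ ψ (u j t) = -t) ∧
      (∀ j, Tendsto (u j) (𝓝[<] 0) (𝓝 z₀)) ∧
      ∀ j k, ∀ s ∈ Ioo α 0, ∀ t ∈ Ioo α 0, u j s = u k t → j = k := by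
  obtain ⟨σ, hσ, hσ₀, V, hV, hinj, hψσ⟩ := hψ.exists_injOn_comp_eq_pow hm hord
  obtain ⟨w, hw, hw_tendsto, hw_inj⟩ := exists_curves_pow_eq_neg hm
  set W := V ∩ {v | AnalyticAt ℂ σ v} ∩ σ ⁻¹' U
  have hW : W ∈ 𝓝 (0 : ℂ) := inter_mem (inter_mem hV hσ.eventually_analyticAt)
    (hσ.continuousAt.preimage_mem_nhds (hσ₀ ▸ hU))
  have hev : ∀ᶠ t in 𝓝[<] 0, t < 0 ∧ ∀ j, w j t ∈ W :=
    eventually_mem_nhdsWithin.and (eventually_all.mpr fun j => hw_tendsto j hW)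
  obtain ⟨α, hα, hαW⟩ := mem_nhdsLT_iff_exists_Ioo_subset.mp hev
  have hψu : ∀ j, ∀ t ∈ Ioo α 0, ψ (σ (w j t)) = -t := fun j t ht => by
    rw [hψσ _ ((hαW ht).2 j).1.1, (hw j t ht.2).2]
  refine ⟨fun j t => σ (w j t), α, hα, fun j t ht => ⟨((hαW ht).2 j).2, ?_, hψu j t ht⟩,
    fun j => hσ₀ ▸ hσ.continuousAt.tendsto.comp (hw_tendsto j), ?_⟩
  · exact (((hαW ht).2 j).1.2.differentiableAt.hasDerivAt.comp t
      (hw j t ht.2).1.hasDerivAt).differentiableAt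
  · intro j k s hs t ht h
    obtain rfl : s = t := by
      simpa using (hψu j s hs).symm.trans ((congrArg ψ h).trans (hψu k t ht))
    exact hw_inj j k s hs.2 (hinj ((hαW hs).2 j).1.1 ((hαW hs).2 k).1.1 h)

theorem exists_primitive_analyticOrderAt_eq {k : ℕ} (hg : AnalyticAt ℂ g z₀)
    (hord : analyticOrderAt g z₀ = k) :
    ∃ ψ : ℂ → ℂ, AnalyticAt ℂ ψ z₀ ∧ analyticOrderAt ψ z₀ = (k + 1 : ℕ) ∧ ψ z₀ = 0 ∧
      ∀ᶠ z in 𝓝 z₀, HasDerivAt ψ (g z) z := by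
  obtain ⟨ε, hε, hgε⟩ := hg.exists_ball_analyticOnNhd
  obtain ⟨ψ, hψ₀, hψ⟩ := hgε.differentiableOn.isExactOn_ball.with_val_at z₀ 0
  have hψg : ∀ᶠ z in 𝓝 z₀, HasDerivAt ψ (g z) z :=
    eventually_of_mem (Metric.ball_mem_nhds z₀ hε) hψ
  have hψan : AnalyticAt ℂ ψ z₀ := DifferentiableOn.analyticAt
    (fun z hz => (hψ z hz).differentiableAt.differentiableWithinAt) (Metric.ball_mem_nhds z₀ hε)
  refine ⟨ψ, hψan, ?_, hψ₀, hψg⟩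
  have := hψan.analyticOrderAt_deriv_add_one
  rw [analyticOrderAt_congr (hψg.mono fun z hz => hz.deriv), hord, hψ₀] at this
  simpa only [sub_zero, Nat.cast_add, Nat.cast_one] using this.symm

theorem exists_solutions_tendsto (hg : AnalyticAt ℂ g z₀) (hm : m ≠ 0)
    (hord : analyticOrderAt g z₀ = (m - 1 : ℕ)) {U : Set ℂ} (hU : U ∈ 𝓝 z₀) :
    ∃ (u : Fin m → ℝ → ℂ) (α : ℝ), α < 0 ∧
      (∀ j, ∀ t ∈ Ioo α 0, u j t ∈ U ∧ u j t ≠ z₀ ∧ HasDerivAt (u j) (-(g (u j t))⁻¹) t) ∧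
      (∀ j, Tendsto (u j) (𝓝[<] 0) (𝓝 z₀)) ∧
      ∀ j k, ∀ s ∈ Ioo α 0, ∀ t ∈ Ioo α 0, u j s = u k t → j = k := by
  obtain ⟨ψ, hψan, hordψ, hψ₀, hψg⟩ := hg.exists_primitive_analyticOrderAt_eq hord
  rw [Nat.sub_add_cancel (Nat.pos_of_ne_zero hm)] at hordψ
  obtain ⟨u, α, hα, hu, htendsto, hdisj⟩ :=
    hψan.exists_curves_comp_eq_neg hm hordψ (inter_mem hU hψg)
  refine ⟨u, α, hα, fun j t ht => ?_, htendsto, hdisj⟩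
  obtain ⟨⟨hUu, hψ'⟩, hdiff, hψu⟩ := hu j t ht
  have hlin : HasDerivAt (fun s => ψ (u j s)) (-1) t := by
    have h : HasDerivAt (fun s : ℝ => -(s : ℂ)) (-1) t := by
      simpa using (hasDerivAt_id t).ofReal_comp.fun_neg
    refine h.congr_of_eventuallyEq ?_
    filter_upwards [Ioo_mem_nhds ht.1 ht.2] with s hs using (hu j s hs).2.2
  have hgD : g (u j t) * deriv (u j) t = -1 := (hψ'.comp t hdiff.hasDerivAt).unique hlin
  have hg0 : g (u j t) ≠ 0 := left_ne_zero_of_mul (hgD ▸ neg_ne_zero.mpr one_ne_zero)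
  have hD : deriv (u j) t = -(g (u j t))⁻¹ := by
    field_simp
    linear_combination hgD
  refine ⟨hUu, fun h => ht.2.ne ?_, hD ▸ hdiff.hasDerivAt⟩
  simpa [h, hψ₀] using hψu

end AnalyticAt

theorem exists_analyticAt_comp_inv_eq_inv_div_sq {f : ℂ → ℂ} {n : ℕ} {c : ℂ} (hn : 2 ≤ n)
    (hc : c ≠ 0) (hf : ∀ᶠ w in Bornology.cobounded ℂ, DifferentiableAt ℂ f w)
    (hasym : Tendsto (fun w => f w / w ^ n) (Bornology.cobounded ℂ) (𝓝 c)) :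
    ∃ g : ℂ → ℂ, AnalyticAt ℂ g 0 ∧ analyticOrderAt g 0 = (n - 2 : ℕ) ∧
      ∀ u ≠ 0, f u⁻¹ = (g u)⁻¹ / u ^ 2 := by
  -- `(u ^ 2 * f u⁻¹)⁻¹` itself takes the junk value `0` at `u = 0`; `h` removes the singularity.
  set h := Function.update (fun u : ℂ => u ^ n * f u⁻¹) 0 c
  have hinv : Tendsto (·⁻¹) (𝓝[≠] (0 : ℂ)) (Bornology.cobounded ℂ) := tendsto_inv₀_nhdsNE_zero
  have hh : AnalyticAt ℂ h 0 := by
    apply Complex.analyticAt_of_differentiable_on_punctured_nhds_of_continuousAt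
    · filter_upwards [hinv.eventually hf, self_mem_nhdsWithin] with u hu hu0
      refine ((differentiableAt_pow n).mul (hu.comp u (differentiableAt_inv hu0)))
        |>.congr_of_eventuallyEq ?_
      filter_upwards [isOpen_compl_singleton.mem_nhds hu0] with v hv
        using Function.update_of_ne hv _ _
    · rw [continuousAt_update_same]
      exact (hasym.comp hinv).congr fun u => by simp [div_eq_mul_inv, mul_comm]
  have hh₀ : h 0 ≠ 0 := by simpa [h] using hc
  refine ⟨fun u => u ^ (n - 2) * (h u)⁻¹, (analyticAt_id.pow _).mul (hh.inv hh₀), ?_,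
    fun u hu => ?_⟩
  · refine (AnalyticAt.analyticOrderAt_eq_natCast ((analyticAt_id.pow _).mul (hh.inv hh₀))).mpr
      ⟨fun u => (h u)⁻¹, hh.inv hh₀, inv_ne_zero hh₀, ?_⟩
    filter_upwards with u
    simp
  · simp only [h, Function.update_of_ne hu]
    rw [← Nat.sub_add_cancel hn, pow_add, Nat.add_sub_cancel]
    field_simp

/-- If `f` is holomorphic on an annulus `R < |z| < ∞` with a pole of order `n ≥ 2` at
infinity (`f(z) ~ c zⁿ` as `z → ∞`, `c ≠ 0`), then `ż = f(z)` has at least `n - 1`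
pairwise disjoint trajectories tending to infinity in finite increasing time. -/
theorem stmt5 (f : ℂ → ℂ) (R : ℝ) (n : ℕ) (hn : 2 ≤ n) (c : ℂ) (hc : c ≠ 0)
    (hf : ∀ w : ℂ, R < ‖w‖ → AnalyticAt ℂ f w)
    (hasym : Filter.Tendsto (fun w : ℂ => f w / w ^ n)
      (Filter.comap norm Filter.atTop) (nhds c)) :
    ∃ (γ : Fin (n - 1) → ℝ → ℂ) (α β : Fin (n - 1) → ℝ),
      (∀ j, α j < β j ∧
        (∀ t ∈ Set.Ioo (α j) (β j), R < ‖γ j t‖ ∧ HasDerivAt (γ j) (f (γ j t)) t) ∧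
        Filter.Tendsto (fun t => ‖γ j t‖) (nhdsWithin (β j) (Set.Iio (β j)))
          Filter.atTop) ∧
      (∀ j k, j ≠ k → ∀ s ∈ Set.Ioo (α j) (β j), ∀ t ∈ Set.Ioo (α k) (β k),
        γ j s ≠ γ k t) := by
  rw [comap_norm_atTop] at hasym
  have hf' : ∀ᶠ w in Bornology.cobounded ℂ, DifferentiableAt ℂ f w := by
    rw [← comap_norm_atTop]
    exact ((eventually_gt_atTop R).comap _).mono fun w hw => (hf w hw).differentiableAt
  obtain ⟨g, hg, hord, hfg⟩ := exists_analyticAt_comp_inv_eq_inv_div_sq hn hc hf' hasym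
  have hU : {u : ℂ | u ≠ 0 → R < ‖u⁻¹‖} ∈ 𝓝 0 := eventually_nhdsWithin_iff.mp
    (tendsto_norm_inv_nhdsNE_zero_atTop.eventually (eventually_gt_atTop R))
  obtain ⟨u, α, hα, hu, htendsto, hdisj⟩ :=
    hg.exists_solutions_tendsto (m := n - 1) (by omega) (by rw [hord, Nat.sub_sub]) hU
  refine ⟨fun j t => (u j t)⁻¹, fun _ => α, fun _ => 0, fun j => ⟨hα, fun t ht => ?_, ?_⟩,
    fun j k hjk s hs t ht h => hjk (hdisj j k s hs t ht (inv_injective h))⟩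
  · obtain ⟨hUu, hne, hD⟩ := hu j t ht
    refine ⟨hUu hne, ?_⟩
    have hfu : f (u j t)⁻¹ = -(-(g (u j t))⁻¹) / u j t ^ 2 := by rw [neg_neg, hfg _ hne]
    exact hfu ▸ hD.inv hne
  · refine tendsto_norm_inv_nhdsNE_zero_atTop.comp (tendsto_nhdsWithin_iff.mpr ⟨htendsto j, ?_⟩)
    filter_upwards [Ioo_mem_nhdsLT hα] with t ht using (hu j t ht).2.1
end

section
/- Let φ be holomorphic and univalent on the right half-plane H with |φ″(v)/φ′(v)| ≤ 4/Re v on H. Then there exists C₁ > 0 such that for all real v ≥ 1, ∫_v^∞ e^{−t}|φ′(t)| dt ≤ C₁ e^{−v} |φ′(v)|. -/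
/-!
On the positive real axis the hypothesis reads `‖φ''(x)‖ ≤ (4 / x) ‖φ'(x)‖` wherever `φ'(x) ≠ 0`.
Fencing `‖φ'‖` from above by `(‖φ'(v)‖ + ε) (x / v)⁴ e^{ε (x - v)}`, whose logarithmic derivative
`4 / x + ε` beats that bound strictly, and letting `ε → 0` gives `‖φ'(t)‖ ≤ ‖φ'(v)‖ (t / v)⁴`
for `t ≥ v`. The integral is then at most `‖φ'(v)‖ v⁻⁴ ∫_v^∞ t⁴ e^{-t} dt`, and the antiderivative
`-(t⁴ + 4t³ + 12t² + 24t + 24) e^{-t}` bounds the last integral by `65 v⁴ e^{-v}` when `v ≥ 1`.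
-/

open MeasureTheory Set Filter Topology Real

section Growth

variable {E : Type*} [NormedAddCommGroup E] [NormedSpace ℝ E] {f f' : ℝ → E} {a b k : ℝ}

theorem norm_le_add_mul_exp_of_norm_deriv_le_div_mul_norm (ha : 0 < a)
    (hf : ∀ x ∈ Icc a b, HasDerivAt f (f' x) x)
    (bound : ∀ x ∈ Ico a b, f x ≠ 0 → ‖f' x‖ ≤ k / x * ‖f x‖) {ε : ℝ} (hε : 0 < ε) :
    ∀ ⦃x⦄, x ∈ Icc a b → ‖f x‖ ≤ (‖f a‖ + ε) * exp (k * (log x - log a) + ε * (x - a)) := by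
  set B : ℝ → ℝ := fun x ↦ (‖f a‖ + ε) * exp (k * (log x - log a) + ε * (x - a))
  have hB : ∀ x, 0 < x → HasDerivAt B (B x * (k / x + ε)) x := fun x hx ↦
    (((((hasDerivAt_log hx.ne').sub_const (log a)).const_mul k).add
      (((hasDerivAt_id' x).sub_const a).const_mul ε)).exp.const_mul (‖f a‖ + ε)).congr_deriv
        (by simp only [B, Pi.add_apply]; ring)
  refine image_norm_le_of_norm_deriv_right_lt_deriv_boundary'
    (fun x hx ↦ (hf x hx).continuousAt.continuousWithinAt)
    (fun x hx ↦ (hf x (Ico_subset_Icc_self hx)).hasDerivWithinAt) (by simp [hε.le])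
    (fun x hx ↦ (hB x (ha.trans_le hx.1)).continuousAt.continuousWithinAt)
    (fun x hx ↦ (hB x (ha.trans_le hx.1)).hasDerivWithinAt) fun x hx hfx ↦ ?_
  have hBx : 0 < B x := by positivity
  have hfx0 : f x ≠ 0 := norm_pos_iff.mp (hfx ▸ hBx)
  calc ‖f' x‖ ≤ k / x * ‖f x‖ := bound x hx hfx0
    _ = k / x * B x := by rw [hfx]
    _ < B x * (k / x + ε) := by nlinarith

theorem norm_le_mul_rpow_of_norm_deriv_le_div_mul_norm (ha : 0 < a)
    (hf : ∀ x ∈ Icc a b, HasDerivAt f (f' x) x)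
    (bound : ∀ x ∈ Ico a b, f x ≠ 0 → ‖f' x‖ ≤ k / x * ‖f x‖) :
    ∀ ⦃x⦄, x ∈ Icc a b → ‖f x‖ ≤ ‖f a‖ * (x / a) ^ k := by
  intro x hx
  have hx0 : 0 < x := ha.trans_le hx.1
  have hlim : Tendsto (fun ε ↦ (‖f a‖ + ε) * exp (k * (log x - log a) + ε * (x - a)))
      (𝓝[>] 0) (𝓝 (‖f a‖ * (x / a) ^ k)) := by
    rw [rpow_def_of_pos (div_pos hx0 ha), log_div hx0.ne' ha.ne', mul_comm (log x - log a)]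
    refine (Continuous.tendsto' ?_ 0 _ (by simp)).mono_left nhdsWithin_le_nhds
    fun_prop
  refine ge_of_tendsto hlim ?_
  filter_upwards [self_mem_nhdsWithin] with ε hε using
    norm_le_add_mul_exp_of_norm_deriv_le_div_mul_norm ha hf bound hε hx

end Growth

theorem norm_deriv_le_mul_rpow_of_norm_logDeriv_deriv_le {φ : ℂ → ℂ} {k : ℝ}
    (hφ : DifferentiableOn ℂ φ {z : ℂ | 0 < z.re})
    (hb : ∀ x : ℝ, 0 < x → ‖logDeriv (deriv φ) x‖ ≤ k / x) {v t : ℝ} (hv : 0 < v) (hvt : v ≤ t) :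
    ‖deriv φ t‖ ≤ ‖deriv φ v‖ * (t / v) ^ k := by
  have hder : ∀ x : ℝ, 0 < x →
      HasDerivAt (fun y : ℝ ↦ deriv φ y) (deriv (deriv φ) x) x := fun x hx ↦
    ((hφ.analyticOnNhd (isOpen_lt continuous_const Complex.continuous_re)).deriv x
      (by simpa using hx)).differentiableAt.hasDerivAt.comp_ofReal
  refine norm_le_mul_rpow_of_norm_deriv_le_div_mul_norm hv
    (fun x hx ↦ hder x (hv.trans_le hx.1)) (fun x hx hx0 ↦ ?_) ⟨hvt, le_rfl⟩
  have := hb x (hv.trans_le hx.1)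
  rwa [logDeriv_apply, norm_div, div_le_iff₀ (norm_pos_iff.mpr hx0)] at this

theorem hasDerivAt_neg_pow_four_poly_mul_exp_neg (x : ℝ) :
    HasDerivAt (fun t ↦ -((t ^ 4 + 4 * t ^ 3 + 12 * t ^ 2 + 24 * t + 24) * exp (-t)))
      (x ^ 4 * exp (-x)) x := by
  refine (((((((hasDerivAt_pow 4 x).add ((hasDerivAt_pow 3 x).const_mul 4)).add
    ((hasDerivAt_pow 2 x).const_mul 12)).add ((hasDerivAt_id' x).const_mul 24)).add_const 24).mul
    (hasDerivAt_neg' x).exp).neg).congr_deriv ?_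
  simp only [Pi.add_apply]
  ring

theorem tendsto_neg_pow_four_poly_mul_exp_neg_atTop :
    Tendsto (fun t ↦ -((t ^ 4 + 4 * t ^ 3 + 12 * t ^ 2 + 24 * t + 24) * exp (-t))) atTop (𝓝 0) := by
  have h := tendsto_pow_mul_exp_neg_atTop_nhds_zero
  simpa [add_mul, mul_assoc] using
    ((((h 4).add ((h 3).const_mul 4)).add ((h 2).const_mul 12)).add ((h 1).const_mul 24)).add
      ((h 0).const_mul 24) |>.neg

theorem integrableOn_Ioi_pow_four_mul_exp_neg (v : ℝ) :
    IntegrableOn (fun t ↦ t ^ 4 * exp (-t)) (Ioi v) :=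
  integrableOn_Ioi_deriv_of_nonneg' (fun x _ ↦ hasDerivAt_neg_pow_four_poly_mul_exp_neg x)
    (fun x _ ↦ by positivity) tendsto_neg_pow_four_poly_mul_exp_neg_atTop

theorem integral_Ioi_pow_four_mul_exp_neg_le {v : ℝ} (hv : 1 ≤ v) :
    ∫ t in Ioi v, t ^ 4 * exp (-t) ≤ 65 * v ^ 4 * exp (-v) := by
  rw [integral_Ioi_of_hasDerivAt_of_nonneg' (fun x _ ↦ hasDerivAt_neg_pow_four_poly_mul_exp_neg x)
    (fun x _ ↦ by positivity) tendsto_neg_pow_four_poly_mul_exp_neg_atTop, zero_sub, neg_neg]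
  gcongr
  have hpow : ∀ j ≤ 4, v ^ j ≤ v ^ 4 := fun j hj ↦ pow_le_pow_right₀ hv hj
  linarith [hpow 3 (by norm_num), hpow 2 (by norm_num), hpow 1 (by norm_num), hpow 0 (by norm_num)]

theorem stmt11_general (φ : ℂ → ℂ)
    (hφd : DifferentiableOn ℂ φ {v : ℂ | 0 < v.re})
    (hb : ∀ v ∈ {v : ℂ | 0 < v.re}, ‖deriv (deriv φ) v / deriv φ v‖ ≤ 4 / v.re) :
    ∃ C₁ : ℝ, 0 < C₁ ∧ ∀ v : ℝ, 1 ≤ v →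
      ∫ t in Set.Ioi v, Real.exp (-t) * ‖deriv φ ((t : ℝ) : ℂ)‖ ≤
        C₁ * Real.exp (-v) * ‖deriv φ ((v : ℝ) : ℂ)‖ := by
  refine ⟨65, by norm_num, fun v hv ↦ ?_⟩
  have hv0 : 0 < v := one_pos.trans_le hv
  set n := ‖deriv φ v‖
  have hpointwise : ∀ t ∈ Ioi v, exp (-t) * ‖deriv φ t‖ ≤ n / v ^ 4 * (t ^ 4 * exp (-t)) := by
    intro t ht
    have hgrowth := norm_deriv_le_mul_rpow_of_norm_logDeriv_deriv_le hφd
      (fun x hx ↦ by simpa only [logDeriv_apply, Complex.ofReal_re] using hb x (by simpa using hx))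
      hv0 ht.le
    rw [div_rpow (hv0.trans ht).le hv0.le] at hgrowth
    norm_cast at hgrowth
    calc exp (-t) * ‖deriv φ t‖ ≤ exp (-t) * (n * (t ^ 4 / v ^ 4)) := by gcongr
      _ = n / v ^ 4 * (t ^ 4 * exp (-t)) := by ring
  calc ∫ t in Ioi v, exp (-t) * ‖deriv φ t‖
      ≤ ∫ t in Ioi v, n / v ^ 4 * (t ^ 4 * exp (-t)) :=
        integral_mono_of_nonneg (.of_forall fun t ↦ by positivity)
          ((integrableOn_Ioi_pow_four_mul_exp_neg v).const_mul _)
          (ae_restrict_of_forall_mem measurableSet_Ioi hpointwise)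
    _ = n / v ^ 4 * ∫ t in Ioi v, t ^ 4 * exp (-t) := integral_const_mul _ _
    _ ≤ n / v ^ 4 * (65 * v ^ 4 * exp (-v)) := by
        gcongr
        exact integral_Ioi_pow_four_mul_exp_neg_le hv
    _ = 65 * exp (-v) * n := by field_simp

/-- If `φ` is holomorphic and univalent on the right half-plane with
`|φ''/φ'| ≤ 4/Re v` there, then there is `C₁ > 0` such that for all real `v ≥ 1`,
`∫_v^∞ e^{-t} |φ'(t)| dt ≤ C₁ e^{-v} |φ'(v)|`. -/
theorem stmt11 (φ : ℂ → ℂ)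
    (hφd : DifferentiableOn ℂ φ {v : ℂ | 0 < v.re})
    (hφi : Set.InjOn φ {v : ℂ | 0 < v.re})
    (hb : ∀ v ∈ {v : ℂ | 0 < v.re}, ‖deriv (deriv φ) v / deriv φ v‖ ≤ 4 / v.re) :
    ∃ C₁ : ℝ, 0 < C₁ ∧ ∀ v : ℝ, 1 ≤ v →
      ∫ t in Set.Ioi v, Real.exp (-t) * ‖deriv φ ((t : ℝ) : ℂ)‖ ≤
        C₁ * Real.exp (-v) * ‖deriv φ ((v : ℝ) : ℂ)‖ :=
  stmt11_general φ hφd hb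
end
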